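/- Let A, Y ∈ M_n(ℂ), where A has singular values ν_1 ≥ ⋯ ≥ ν_n. Then |det(A+Y) − det(A)| ≤ Σ_{k=1}^{n} p_{n−k}(ν_1, …, ν_n) · ‖Y‖^k. -/

import Mathlib

set_option synthInstance.maxHeartbeats 1000000
set_option maxHeartbeats 1000000

noncomputable section

/-- `V = ℂⁿ` with the standard inner product. -/
abbrev Vec (n : ℕ) : Type := EuclideanSpace ℂ (Fin n)

/-- `L(V)`, the space of linear operators on `V`, with the operator norm. -/
abbrev Op (n : ℕ) : Type := Vec n →L[ℂ] Vec n

/-- Coordinate model of the `m`-th tensor power `⊗^m V` of `V = ℂⁿ`: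
functions on multi-indices `Γ_{m,n}`, with the inner product making the pure tensors of
orthonormal vectors orthonormal. -/
abbrev TVec (n m : ℕ) : Type := EuclideanSpace ℂ (Fin m → Fin n)

abbrev TOp (n m : ℕ) : Type := TVec n m →L[ℂ] TVec n m

/-- The `(a,b)` matrix entry of an operator on `ℂⁿ` in the standard basis. -/
def entry {n : ℕ} (S : Op n) (a b : Fin n) : ℂ := S (EuclideanSpace.single b 1) a

/-- The tensor product `T 0 ⊗ T 1 ⊗ ⋯ ⊗ T (m-1)` of a family of operators,
acting on `⊗^m V` (coordinate model). -/
def tensorFam {n m : ℕ} (T : Fin m → Op n) : TOp n m :=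
  Matrix.toEuclideanCLM (𝕜 := ℂ)
    (Matrix.of fun α β : Fin m → Fin n => ∏ i, entry (T i) (α i) (β i))

/-- The `m`-th tensor power `⊗^m T` of the operator `T`. -/
def tensorPow (n m : ℕ) (T : Op n) : TOp n m := tensorFam fun _ => T

/-- The symmetrized tensor product `X^1 ⊗̃ ⋯ ⊗̃ X^m = (1/m!) ∑_σ X^{σ(1)} ⊗ ⋯ ⊗ X^{σ(m)}`. -/
def symTensor {n m : ℕ} (X : Fin m → Op n) : TOp n m :=
  ((m.factorial : ℂ))⁻¹ • ∑ σ : Equiv.Perm (Fin m), tensorFam (X ∘ σ)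

/-- The permutation operator `P(σ)` on `⊗^m V`, `P(σ)(v_1 ⊗ ⋯ ⊗ v_m) = v_{σ⁻¹(1)} ⊗ ⋯ ⊗ v_{σ⁻¹(m)}`. -/
def permOp (n m : ℕ) (σ : Equiv.Perm (Fin m)) : TOp n m :=
  Matrix.toEuclideanCLM (𝕜 := ℂ)
    (Matrix.of fun α β : Fin m → Fin n => if β = α ∘ σ then 1 else 0)

/-- The symmetrizer `K_χ = (χ(id)/m!) ∑_σ χ(σ) P(σ)` associated with a character `χ` of `S_m`. -/
def Kproj (n m : ℕ) (χ : Equiv.Perm (Fin m) → ℂ) : TOp n m :=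
  (χ 1 / (m.factorial : ℂ)) • ∑ σ : Equiv.Perm (Fin m), χ σ • permOp n m σ

/-- The symmetry class of tensors `V_χ`, the range of `K_χ`. -/
def symClass (n m : ℕ) (χ : Equiv.Perm (Fin m) → ℂ) : Submodule ℂ (TVec n m) :=
  LinearMap.range (Kproj n m χ : TVec n m →ₗ[ℂ] TVec n m)

/-- `K_χ(T)`, the restriction of `⊗^m T` to the invariant subspace `V_χ`,
realized as `Q* ∘ (⊗^m T) ∘ Q` where `Q : V_χ → ⊗^m V` is the inclusion. -/
def Kmap (n m : ℕ) (χ : Equiv.Perm (Fin m) → ℂ) (T : Op n) :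
    symClass n m χ →L[ℂ] symClass n m χ :=
  ((symClass n m χ).orthogonalProjectionOnto).comp
    ((tensorPow n m T).comp (symClass n m χ).subtypeL)

/-- `X^1 ∗ ⋯ ∗ X^m`, the restriction of `X^1 ⊗̃ ⋯ ⊗̃ X^m` to the invariant subspace `V_χ`. -/
def starProd (n m : ℕ) (χ : Equiv.Perm (Fin m) → ℂ) (X : Fin m → Op n) :
    symClass n m χ →L[ℂ] symClass n m χ :=
  ((symClass n m χ).orthogonalProjectionOnto).comp
    ((symTensor X).comp (symClass n m χ).subtypeL)

/-- `χ` is the character of an irreducible complex representation of `S_m`. -/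
def IsIrreducibleCharacter (m : ℕ) (χ : Equiv.Perm (Fin m) → ℂ) : Prop :=
  ∃ (d : ℕ) (ρ : Representation ℂ (Equiv.Perm (Fin m)) (Fin d → ℂ)),
    0 < d ∧
    (∀ p : Submodule ℂ (Fin d → ℂ), (∀ g x, x ∈ p → ρ g x ∈ p) → p = ⊥ ∨ p = ⊤) ∧
    ∀ g, χ g = LinearMap.trace ℂ (Fin d → ℂ) (ρ g)

/-- `T` has singular values `ν 0 ≥ ν 1 ≥ ⋯ ≥ ν (n-1)` (singular value decomposition). -/
def HasSingularValues {n : ℕ} (T : Op n) (ν : Fin n → ℝ) : Prop :=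
  (∀ i, 0 ≤ ν i) ∧ Antitone ν ∧
    ∃ e f : OrthonormalBasis (Fin n) ℂ (Vec n), ∀ i, T (e i) = (ν i : ℂ) • f i

/-- `p_t`, the elementary symmetric polynomial of degree `t` in `m` variables. -/
def esymm {R : Type*} [CommSemiring R] (m t : ℕ) (x : Fin m → R) : R :=
  ∑ s ∈ Finset.powersetCard t Finset.univ, ∏ i ∈ s, x i

/-- `multFun α i = |α⁻¹(i)|`, the multiplicity function of `α ∈ Γ_{m,n}`, whose nonzero values,
arranged decreasingly, form the multiplicity partition `μ(α)`. -/
def multFun {m n : ℕ} (α : Fin m → Fin n) : Fin n → ℕ :=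
  fun i => (Finset.univ.filter fun j => α j = i).card

/-- The (antitone) partition `π` majorizes the multiplicity list `c` (i.e. `μ ⪯ π` where `μ` is the
decreasing rearrangement of `c`): for every `s`, the sum of any `s` values of `c` is at most
`π 0 + ⋯ + π (s-1)`. -/
def MajorizesMult {n : ℕ} (π : Fin n → ℕ) (c : Fin n → ℕ) : Prop :=
  ∀ A : Finset (Fin n),
    ∑ i ∈ A, c i ≤ ∑ j ∈ Finset.univ.filter (fun j : Fin n => (j : ℕ) < A.card), π j

/-- `w = ω(π) ∈ Γ_{m,n}`: the nondecreasing map taking each value `i` with multiplicity `π i`. -/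
def IsOmega {m n : ℕ} (π : Fin n → ℕ) (w : Fin m → Fin n) : Prop :=
  Monotone w ∧ ∀ i, (Finset.univ.filter fun j => w j = i).card = π i

/-- The condition `Ω_χ = {α : π majorizes μ(α)}`, i.e. for every `α ∈ Γ_{m,n}`,
`∑_{σ ∈ G_α} χ(σ) ≠ 0` iff `π` majorizes the multiplicity partition `μ(α)`; it holds exactly when
`π` is the partition of `m` canonically associated with the irreducible character `χ`. -/
def OmegaChiCondition {m n : ℕ} (χ : Equiv.Perm (Fin m) → ℂ) (π : Fin n → ℕ) : Prop :=
  ∀ α : Fin m → Fin n,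
    (∑ σ ∈ Finset.univ.filter (fun σ : Equiv.Perm (Fin m) => α ∘ σ = α), χ σ) ≠ 0 ↔
      MajorizesMult π (multFun α)

/-- A linear operator on a subspace `S` of `⊗^m V` is positive semidefinite
(for the inner product inherited from `⊗^m V`). -/
def IsPSDOn {n m : ℕ} (S : Submodule ℂ (TVec n m)) (A : S →L[ℂ] S) : Prop :=
  (∀ x y : S,
      (inner ℂ ((A x : TVec n m)) (y : TVec n m) : ℂ) = inner ℂ (x : TVec n m) ((A y : TVec n m))) ∧
  ∀ x : S, 0 ≤ (inner ℂ ((A x : TVec n m)) (x : TVec n m) : ℂ).re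

/-- `⊗^m_S P`: the tensor product `X^1 ⊗ ⋯ ⊗ X^m` in which `X^i = P` for `i ∈ S` and `X^i = I`
otherwise.  (A subset `S` of `{1,…,m}` of size `m-k` corresponds to the strictly increasing map
`β ∈ Q_{m-k,m}` enumerating it, so this realizes `⊗^m_β P`.) -/
def tensorSel {n m : ℕ} (S : Finset (Fin m)) (P : Op n) : TOp n m :=
  tensorFam fun i => if i ∈ S then P else 1

/-- The pure tensor `v_1 ⊗ ⋯ ⊗ v_m` in the coordinate model of `⊗^m V`. -/
def tensorVec {n m : ℕ} (v : Fin m → Vec n) : TVec n m :=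
  (WithLp.equiv 2 ((Fin m → Fin n) → ℂ)).symm fun α => ∏ i, v i (α i)

/-- The decomposable symmetrized tensor `v_1 ∗ ⋯ ∗ v_m = K_χ(v_1 ⊗ ⋯ ⊗ v_m)`,
as an element of `V_χ`. -/
def estarVec (n m : ℕ) (χ : Equiv.Perm (Fin m) → ℂ) (v : Fin m → Vec n) : symClass n m χ :=
  ⟨Kproj n m χ (tensorVec v), LinearMap.mem_range.mpr ⟨tensorVec v, rfl⟩⟩

open scoped Matrix.Norms.L2Operator

/-- The immanant `d_χ(A) = ∑_{σ ∈ S_n} χ(σ) ∏_i a_{iσ(i)}` of a complex `n × n` matrix. -/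
def immanant {n : ℕ} (χ : Equiv.Perm (Fin n) → ℂ) (A : Matrix (Fin n) (Fin n) ℂ) : ℂ :=
  ∑ σ : Equiv.Perm (Fin n), χ σ * ∏ i, A i (σ i)

/-- The matrix `A` has singular values `ν 0 ≥ ν 1 ≥ ⋯ ≥ ν (n-1)`. -/
def MatrixHasSingularValues {n : ℕ} (A : Matrix (Fin n) (Fin n) ℂ) (ν : Fin n → ℝ) : Prop :=
  HasSingularValues (Matrix.toEuclideanCLM (𝕜 := ℂ) A) ν

/-!
Take a singular value decomposition `A = U D V*` with `D = diag ν`. Unitary invariance of the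
operator norm and of `|det|` reduces the claim to `|det (D + Z) - det D|` with `‖Z‖ = ‖Y‖`.
Expanding the determinant row by row, `det (D + Z) = ∑ₛ (∏_{i ∉ s} νᵢ) det Z[s,s]` over all
subsets `s`, where the `s = ∅` term is `det D`; and each principal minor satisfies
`|det Z[s,s]| ≤ ‖Z[s,s]‖^|s| ≤ ‖Z‖^|s|`, since a determinant is a product of eigenvalues, each
bounded by the norm. The resulting bound `∏ (νᵢ + ‖Y‖) - ∏ νᵢ` expands to
`∑_{k ≥ 1} p_{n-k}(ν) ‖Y‖^k`.
-/

open scoped Matrix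

namespace Matrix

theorem det_diagonal_add {n R : Type*} [Fintype n] [DecidableEq n] [CommRing R]
    (d : n → R) (M : Matrix n n R) :
    (diagonal d + M).det =
      ∑ s : Finset n, (∏ i ∈ sᶜ, d i) * (M.submatrix (↑) (↑) : Matrix s s R).det := by
  have hrows : (diagonal d + M).det = detRowAlternating (M.row + (diagonal d).row) := by
    rw [add_comm]; rfl
  rw [hrows, (detRowAlternating : (n → R) [⋀^n]→ₗ[R] R).map_add_univ]
  refine Finset.sum_congr rfl fun s _ => ?_
  have hfactor : Matrix.of (s.piecewise M.row (diagonal d).row) =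
      diagonal (fun i => if i ∈ s then 1 else d i) *
        Matrix.of (s.piecewise M.row (1 : Matrix n n R).row) := by
    ext i j
    by_cases hi : i ∈ s <;> simp [hi, diagonal_mul, diagonal_apply, one_apply]
  change det (Matrix.of (s.piecewise M.row (diagonal d).row)) = _
  rw [hfactor, det_mul, det_diagonal, det_piecewise_one_eq_submatrix_det,
    Finset.prod_ite, Finset.prod_const_one, one_mul]
  congr 1
  exact Finset.prod_congr (by ext; simp) fun _ _ => rfl

section L2OpNorm

variable {𝕜 : Type*} [RCLike 𝕜] {l m n : Type*} [Fintype l] [Fintype m] [Fintype n]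

theorem l2_opNorm_one_le [DecidableEq n] : ‖(1 : Matrix n n 𝕜)‖ ≤ 1 := by
  rw [cstar_norm_def, map_one]
  exact ContinuousLinearMap.norm_id_le

theorem l2_opNorm_le_one_of_conjTranspose_mul_self_eq_one [DecidableEq n] {M : Matrix m n 𝕜}
    (hM : Mᴴ * M = 1) : ‖M‖ ≤ 1 := by
  have hsq : ‖M‖ * ‖M‖ ≤ 1 := by
    rw [← l2_opNorm_conjTranspose_mul_self, hM]
    exact l2_opNorm_one_le
  nlinarith [norm_nonneg M]

theorem l2_opNorm_submatrix_le [DecidableEq l] [DecidableEq m] [DecidableEq n] (M : Matrix m n 𝕜)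
    {f : l → m} {g : l → n} (hf : Function.Injective f) (hg : Function.Injective g) :
    ‖M.submatrix f g‖ ≤ ‖M‖ := by
  have hrows : ‖(1 : Matrix m m 𝕜).submatrix f id‖ ≤ 1 := by
    rw [← l2_opNorm_conjTranspose]
    refine l2_opNorm_le_one_of_conjTranspose_mul_self_eq_one ?_
    rw [conjTranspose_conjTranspose, conjTranspose_submatrix, conjTranspose_one,
      ← submatrix_mul _ _ _ _ _ Function.bijective_id, Matrix.mul_one, submatrix_one _ hf]
  have hcols : ‖(1 : Matrix n n 𝕜).submatrix id g‖ ≤ 1 := by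
    refine l2_opNorm_le_one_of_conjTranspose_mul_self_eq_one ?_
    rw [conjTranspose_submatrix, conjTranspose_one,
      ← submatrix_mul _ _ _ _ _ Function.bijective_id, Matrix.mul_one, submatrix_one _ hg]
  have hfactor : M.submatrix f g =
      (1 : Matrix m m 𝕜).submatrix f id * M * (1 : Matrix n n 𝕜).submatrix id g := by
    ext i j
    simp [mul_apply, one_apply]
  calc ‖M.submatrix f g‖
      ≤ ‖(1 : Matrix m m 𝕜).submatrix f id‖ * ‖M‖ * ‖(1 : Matrix n n 𝕜).submatrix id g‖ := by
        rw [hfactor]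
        exact (l2_opNorm_mul _ _).trans
          (mul_le_mul_of_nonneg_right (l2_opNorm_mul _ _) (norm_nonneg _))
    _ ≤ 1 * ‖M‖ * 1 := by gcongr
    _ = ‖M‖ := by ring

theorem norm_det_mul_mul_sub_of_mem_unitaryGroup [DecidableEq n] {U W : Matrix n n 𝕜}
    (hU : U ∈ unitaryGroup n 𝕜) (hW : W ∈ unitaryGroup n 𝕜) (M N : Matrix n n 𝕜) :
    ‖(U * M * W).det - (U * N * W).det‖ = ‖M.det - N.det‖ := by
  have hfactor : (U * M * W).det - (U * N * W).det = U.det * (M.det - N.det) * W.det := by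
    simp only [det_mul]; ring
  rw [hfactor, norm_mul, norm_mul, CStarRing.norm_of_mem_unitary (det_of_mem_unitary hU),
    CStarRing.norm_of_mem_unitary (det_of_mem_unitary hW), one_mul, mul_one]

end L2OpNorm

variable {n : Type*} [Fintype n] [DecidableEq n]

theorem norm_det_le_l2_opNorm_pow (M : Matrix n n ℂ) : ‖M.det‖ ≤ ‖M‖ ^ Fintype.card n := by
  rcases isEmpty_or_nonempty n with _ | _
  · simp
  calc ‖M.det‖ = (M.charpoly.roots.map (normHom : ℂ →*₀ ℝ)).prod := by
        rw [det_eq_prod_roots_charpoly, ← map_multiset_prod]; rfl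
    _ ≤ ‖M‖ ^ M.charpoly.roots.card :=
        Multiset.prod_map_le_pow_card (fun μ _ => norm_nonneg μ) fun _ hμ =>
          spectrum.norm_le_norm_of_mem
            (mem_spectrum_of_isRoot_charpoly (Polynomial.isRoot_of_mem_roots hμ))
    _ = ‖M‖ ^ Fintype.card n := by
        rw [IsAlgClosed.card_roots_eq_natDegree, charpoly_natDegree_eq_dim]

theorem norm_det_diagonal_add_sub_le (d : n → ℂ) (Z : Matrix n n ℂ) :
    ‖(diagonal d + Z).det - (diagonal d).det‖ ≤ ∏ i, (‖d i‖ + ‖Z‖) - ∏ i, ‖d i‖ := by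
  have hterm : ∀ s : Finset n,
      ‖(∏ i ∈ sᶜ, d i) * (Z.submatrix (↑) (↑) : Matrix s s ℂ).det‖ ≤
        (∏ i ∈ sᶜ, ‖d i‖) * ‖Z‖ ^ s.card := fun s => by
    rw [norm_mul, norm_prod]
    gcongr
    calc ‖(Z.submatrix (↑) (↑) : Matrix s s ℂ).det‖
        ≤ ‖(Z.submatrix (↑) (↑) : Matrix s s ℂ)‖ ^ s.card := by
          simpa using norm_det_le_l2_opNorm_pow (Z.submatrix ((↑) : s → n) (↑))
      _ ≤ ‖Z‖ ^ s.card := by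
          gcongr
          exact l2_opNorm_submatrix_le Z Subtype.val_injective Subtype.val_injective
  have hdet : (diagonal d + Z).det - (diagonal d).det =
      ∑ s ∈ Finset.univ.erase ∅, (∏ i ∈ sᶜ, d i) * (Z.submatrix (↑) (↑) : Matrix s s ℂ).det := by
    rw [det_diagonal_add, ← Finset.add_sum_erase _ _ (Finset.mem_univ ∅)]
    simp
  have hprod : ∏ i, (‖d i‖ + ‖Z‖) - ∏ i, ‖d i‖ =
      ∑ s ∈ Finset.univ.erase ∅, (∏ i ∈ sᶜ, ‖d i‖) * ‖Z‖ ^ s.card := by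
    have hexpand : ∏ i, (‖d i‖ + ‖Z‖) = ∑ s : Finset n, (∏ i ∈ sᶜ, ‖d i‖) * ‖Z‖ ^ s.card := by
      simp_rw [add_comm (‖d _‖), Finset.prod_add, Finset.powerset_univ, Finset.prod_const,
        Finset.compl_eq_univ_sdiff, mul_comm]
    rw [hexpand, ← Finset.add_sum_erase _ _ (Finset.mem_univ ∅)]
    simp
  rw [hdet, hprod]
  exact (norm_sum_le _ _).trans (Finset.sum_le_sum fun s _ => hterm s)

end Matrix

theorem sum_esymm_mul_pow_eq_prod_add_sub_prod {R : Type*} [CommRing R] (n : ℕ) (x : Fin n → R)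
    (r : R) :
    ∑ k ∈ Finset.Icc 1 n, esymm n (n - k) x * r ^ k = ∏ i, (x i + r) - ∏ i, x i := by
  have hexpand : ∏ i, (x i + r) = ∑ k ∈ Finset.range (n + 1), esymm n (n - k) x * r ^ k := by
    rw [Finset.prod_add, Finset.sum_powerset, Finset.card_univ, Fintype.card_fin,
      ← Finset.sum_range_reflect]
    refine Finset.sum_congr rfl fun k hk => ?_
    rw [esymm, Finset.sum_mul]
    refine Finset.sum_congr rfl fun t ht => ?_
    rw [Finset.prod_const, ← Finset.compl_eq_univ_sdiff, Finset.card_compl, Fintype.card_fin,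
      Finset.mem_powersetCard_univ.mp ht]
    congr 2
    have := Finset.mem_range.mp hk
    omega
  have hfirst : esymm n n x = ∏ i, x i := by
    have hsingle : Finset.powersetCard n (Finset.univ : Finset (Fin n)) = {Finset.univ} := by
      simpa using Finset.powersetCard_self (Finset.univ : Finset (Fin n))
    rw [esymm, hsingle, Finset.sum_singleton]
  rw [hexpand, Finset.range_eq_Ico, Finset.sum_eq_sum_Ico_succ_bot (by omega : 0 < n + 1), zero_add,
    Finset.Ico_add_one_right_eq_Icc, Nat.sub_zero, hfirst, pow_zero, mul_one, add_sub_cancel_left]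

theorem MatrixHasSingularValues.exists_eq_mul_diagonal_mul {n : ℕ}
    {A : Matrix (Fin n) (Fin n) ℂ} {ν : Fin n → ℝ} (hA : MatrixHasSingularValues A ν) :
    ∃ U ∈ Matrix.unitaryGroup (Fin n) ℂ, ∃ V ∈ Matrix.unitaryGroup (Fin n) ℂ,
      A = U * Matrix.diagonal (fun i => (ν i : ℂ)) * star V := by
  obtain ⟨-, -, e, f, hef⟩ := hA
  let b := EuclideanSpace.basisFun (Fin n) ℂ
  set U := b.toBasis.toMatrix f
  set V := b.toBasis.toMatrix e
  have hV := b.toMatrix_orthonormalBasis_mem_unitary e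
  have hAV : A * V = U * Matrix.diagonal (fun i => (ν i : ℂ)) := by
    ext i j
    have := congr_arg (· i) (hef j)
    rw [Matrix.mul_diagonal, Matrix.mul_apply]
    simpa [U, V, b, Module.Basis.toMatrix_apply, Matrix.mulVec, dotProduct, mul_comm] using this
  refine ⟨U, b.toMatrix_orthonormalBasis_mem_unitary f, V, hV, ?_⟩
  rw [← hAV, Matrix.mul_assoc, Matrix.mem_unitaryGroup_iff.mp hV, Matrix.mul_one]

open Matrix in
/-- `|det(A+Y) − det(A)| ≤ ∑_{k=1}^n p_{n−k}(ν_1,…,ν_n) ‖Y‖^k`, where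
`ν_1 ≥ ⋯ ≥ ν_n` are the singular values of `A`. -/
theorem det_perturbation (n : ℕ)
    (A Y : Matrix (Fin n) (Fin n) ℂ) (ν : Fin n → ℝ) (hν : MatrixHasSingularValues A ν) :
    ‖(A + Y).det - A.det‖ ≤ ∑ k ∈ Finset.Icc 1 n, esymm n (n - k) ν * ‖Y‖ ^ k := by
  have hν_norm : ∀ i, ‖(ν i : ℂ)‖ = ν i := fun i => by
    rw [Complex.norm_real, Real.norm_of_nonneg (hν.1 i)]
  obtain ⟨U, hU, V, hV, rfl⟩ := hν.exists_eq_mul_diagonal_mul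
  set D := diagonal fun i => (ν i : ℂ)
  set Z := star U * Y * V
  have hY : Y = U * Z * star V := by
    simp only [Z, ← mul_assoc, Unitary.mul_star_self_of_mem hU, one_mul]
    rw [mul_assoc, Unitary.mul_star_self_of_mem hV, mul_one]
  have hZ : ‖Z‖ = ‖Y‖ := by
    rw [CStarRing.norm_mul_mem_unitary _ hV,
      CStarRing.norm_mem_unitary_mul _ (Unitary.star_mem hU)]
  calc ‖(U * D * star V + Y).det - (U * D * star V).det‖ = ‖(D + Z).det - D.det‖ := by
        rw [hY, ← add_mul, ← mul_add,
          norm_det_mul_mul_sub_of_mem_unitaryGroup hU (Unitary.star_mem hV)]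
    _ ≤ ∏ i, (ν i + ‖Y‖) - ∏ i, ν i := by
        simpa only [hν_norm, hZ] using norm_det_diagonal_add_sub_le (fun i => (ν i : ℂ)) Z
    _ = ∑ k ∈ Finset.Icc 1 n, esymm n (n - k) ν * ‖Y‖ ^ k :=
        (sum_esymm_mul_pow_eq_prod_add_sub_prod n ν ‖Y‖).symm

end
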